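/- For every i in {1,...,n} and every homogeneous element f of R, the element ψ(f) x_i - (-1)^{|f||x_i|} x_i ψ(f) - {f, x_i} of F(R) lies in the ideal J. -/
import Mathlib


noncomputable section

open scoped DirectSum

/-- The sign `(-1)^m`, as an integer, for `m : ℤ`. -/
def sgn (m : ℤ) : ℤ := (Int.negOnePow m : ℤ)

/-- A differential graded Poisson algebra structure on a `ℤ`-graded `k`-algebra `A`,
whose grading is given by `𝒜`. -/
structure DGPoissonAlgebra (k : Type) [Field k] (A : Type) [Ring A] [Algebra k A]
    (𝒜 : ℤ → Submodule k A) : Type where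
  /-- the Poisson bracket -/
  br : A →ₗ[k] A →ₗ[k] A
  /-- the differential -/
  d : A →ₗ[k] A
  br_mem : ∀ ⦃i j : ℤ⦄ ⦃a b : A⦄, a ∈ 𝒜 i → b ∈ 𝒜 j → br a b ∈ 𝒜 (i + j)
  d_mem : ∀ ⦃i : ℤ⦄ ⦃a : A⦄, a ∈ 𝒜 i → d a ∈ 𝒜 (i + 1)
  antisymm : ∀ ⦃i j : ℤ⦄ ⦃a b : A⦄, a ∈ 𝒜 i → b ∈ 𝒜 j →
    br a b = -(sgn (i * j) • br b a)
  jacobi : ∀ ⦃i j l : ℤ⦄ ⦃a b c : A⦄, a ∈ 𝒜 i → b ∈ 𝒜 j → c ∈ 𝒜 l →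
    br a (br b c) = br (br a b) c + sgn (i * j) • br b (br a c)
  gcomm : ∀ ⦃i j : ℤ⦄ ⦃a b : A⦄, a ∈ 𝒜 i → b ∈ 𝒜 j → a * b = sgn (i * j) • (b * a)
  leibniz : ∀ ⦃i j l : ℤ⦄ ⦃a b c : A⦄, a ∈ 𝒜 i → b ∈ 𝒜 j → c ∈ 𝒜 l →
    br a (b * c) = br a b * c + sgn (i * j) • (b * br a c)
  d_sq : ∀ a : A, d (d a) = 0
  d_br : ∀ ⦃i j : ℤ⦄ ⦃a b : A⦄, a ∈ 𝒜 i → b ∈ 𝒜 j →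
    d (br a b) = br (d a) b + sgn i • br a (d b)
  d_mul : ∀ ⦃i j : ℤ⦄ ⦃a b : A⦄, a ∈ 𝒜 i → b ∈ 𝒜 j →
    d (a * b) = d a * b + sgn i • (a * d b)

/-- A differential graded algebra structure (i.e. a differential) on a `ℤ`-graded
`k`-algebra `B` with grading `ℬ`. -/
structure DGAlgebra (k : Type) [Field k] (B : Type) [Ring B] [Algebra k B]
    (ℬ : ℤ → Submodule k B) : Type where
  /-- the differential -/
  d : B →ₗ[k] B
  d_mem : ∀ ⦃i : ℤ⦄ ⦃b : B⦄, b ∈ ℬ i → d b ∈ ℬ (i + 1)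
  d_sq : ∀ b : B, d (d b) = 0
  d_mul : ∀ ⦃i j : ℤ⦄ ⦃a b : B⦄, a ∈ ℬ i → b ∈ ℬ j →
    d (a * b) = d a * b + sgn i • (a * d b)

/-- `f` is a DG algebra map: a degree-`0` algebra map commuting with the differentials. -/
structure IsDGAlgebraMap (k : Type) [Field k] {A B : Type} [Ring A] [Algebra k A]
    [Ring B] [Algebra k B] (𝒜 : ℤ → Submodule k A) (ℬ : ℤ → Submodule k B)
    (dA : A →ₗ[k] A) (dB : B →ₗ[k] B) (f : A →ₐ[k] B) : Prop where
  map_mem : ∀ ⦃i : ℤ⦄ ⦃a : A⦄, a ∈ 𝒜 i → f a ∈ ℬ i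
  map_d : ∀ a : A, f (dA a) = dB (f a)

/-- The compatibility conditions satisfied by a pair `(f, g)` from a DG Poisson algebra
`A` to a DG algebra `B`: `f` is a DG algebra map, `g` is a degree-`0` `k`-linear map
commuting with the differentials which is a graded Lie algebra map into `B` with the
graded commutator, and the two mixed identities hold. -/
def UEACompat (k : Type) [Field k] {A B : Type} [Ring A] [Algebra k A]
    [Ring B] [Algebra k B] (𝒜 : ℤ → Submodule k A) (ℬ : ℤ → Submodule k B)
    (P : DGPoissonAlgebra k A 𝒜) (dB : B →ₗ[k] B)
    (f : A →ₐ[k] B) (g : A →ₗ[k] B) : Prop :=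
  IsDGAlgebraMap k 𝒜 ℬ P.d dB f ∧
  (∀ ⦃i : ℤ⦄ ⦃a : A⦄, a ∈ 𝒜 i → g a ∈ ℬ i) ∧
  (∀ a : A, g (P.d a) = dB (g a)) ∧
  (∀ ⦃i j : ℤ⦄ ⦃a b : A⦄, a ∈ 𝒜 i → b ∈ 𝒜 j →
    g (P.br a b) = g a * g b - sgn (i * j) • (g b * g a)) ∧
  (∀ ⦃i j : ℤ⦄ ⦃a b : A⦄, a ∈ 𝒜 i → b ∈ 𝒜 j →
    f (P.br a b) = g a * f b - sgn (i * j) • (f b * g a)) ∧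
  (∀ ⦃i j : ℤ⦄ ⦃a b : A⦄, a ∈ 𝒜 i → b ∈ 𝒜 j →
    g (a * b) = f a * g b + sgn (i * j) • (f b * g a))

/-- `(E, α, β)` is a universal enveloping algebra of the DG Poisson algebra `A`. -/
def IsUEA (k : Type) [Field k] {A E : Type} [Ring A] [Algebra k A] [Ring E] [Algebra k E]
    (𝒜 : ℤ → Submodule k A) (ℰ : ℤ → Submodule k E)
    (P : DGPoissonAlgebra k A 𝒜) (DE : DGAlgebra k E ℰ)
    (α : A →ₐ[k] E) (β : A →ₗ[k] E) : Prop :=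
  UEACompat k 𝒜 ℰ P DE.d α β ∧
  ∀ (D : Type) [Ring D] [Algebra k D] (𝒟 : ℤ → Submodule k D) [GradedAlgebra 𝒟]
    (dD : DGAlgebra k D 𝒟) (f : A →ₐ[k] D) (g : A →ₗ[k] D),
    UEACompat k 𝒜 𝒟 P dD.d f g →
    ∃! φ : E →ₐ[k] D, IsDGAlgebraMap k ℰ 𝒟 DE.d dD.d φ ∧
      φ.comp α = f ∧ φ.toLinearMap.comp β = g

/-- The two-sided ideal of `F` generated by a set `S`, as a `k`-submodule. -/
def idealGen (k : Type) [Field k] {F : Type} [Ring F] [Algebra k F] (S : Set F) :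
    Submodule k F :=
  Submodule.span k {z : F | ∃ u v : F, ∃ s ∈ S, z = u * s * v}

/-- The left ideal of `F` generated by a set `S`, as a `k`-submodule. -/
def leftIdealGen (k : Type) [Field k] {F : Type} [Ring F] [Algebra k F] (S : Set F) :
    Submodule k F :=
  Submodule.span k {z : F | ∃ u : F, ∃ s ∈ S, z = u * s}

/-- A submodule is graded if it is spanned by its homogeneous elements. -/
def IsGradedSubmodule (k : Type) [Field k] {A : Type} [AddCommGroup A] [Module k A]
    (𝒜 : ℤ → Submodule k A) (M : Submodule k A) : Prop :=
  M ≤ Submodule.span k {a : A | a ∈ M ∧ ∃ i, a ∈ 𝒜 i}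

/-- A `k`-submodule which is a two-sided ideal. -/
def IsTwoSidedIdealSub (k : Type) [Field k] {A : Type} [Ring A] [Algebra k A]
    (M : Submodule k A) : Prop :=
  ∀ r : A, ∀ m ∈ M, r * m ∈ M ∧ m * r ∈ M

/-- A DG ideal: a graded two-sided ideal closed under the differential `d`. -/
def IsDGIdeal (k : Type) [Field k] {A : Type} [Ring A] [Algebra k A]
    (𝒜 : ℤ → Submodule k A) (d : A →ₗ[k] A) (M : Submodule k A) : Prop :=
  IsTwoSidedIdealSub k M ∧ IsGradedSubmodule k 𝒜 M ∧ ∀ m ∈ M, d m ∈ M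

/-- A DG Poisson ideal: a DG ideal which is also closed under the Poisson bracket. -/
def IsDGPoissonIdeal (k : Type) [Field k] {A : Type} [Ring A] [Algebra k A]
    (𝒜 : ℤ → Submodule k A) (P : DGPoissonAlgebra k A 𝒜) (M : Submodule k A) : Prop :=
  IsDGIdeal k 𝒜 P.d M ∧ ∀ a : A, ∀ m ∈ M, P.br a m ∈ M

/-- `π : A → B` presents `B` as the quotient of `A` by `I`. -/
structure IsQuotientBy (k : Type) [Field k] {A B : Type} [Ring A] [Algebra k A]
    [Ring B] [Algebra k B] (π : A →ₐ[k] B) (I : Submodule k A) : Prop where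
  surj : Function.Surjective π
  ker : ∀ a : A, π a = 0 ↔ a ∈ I

/-- The (noncommutative, ordered) monomial `x 0 ^ e 0 * x 1 ^ e 1 * ⋯` . -/
def xMono {n : ℕ} {R : Type} [Ring R] (x : Fin n → R) (e : Fin n → ℕ) : R :=
  ((List.finRange n).map fun r => x r ^ e r).prod
/-- The map `ψ : R → F(R)`, `ψ(f) = ∑_α ψ_α(f) y_α`. -/
def psiF {k R F : Type} [Field k] [Ring R] [Algebra k R] [Ring F] [Algebra k F]
    {Λ : Type} (ι : R →ₐ[k] F) (ψ : Λ → R →ₗ[k] R) (y : Λ → F) (f : R) : F :=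
  ∑ᶠ α : Λ, ι (ψ α f) * y α

/-- The generators of the graded ideal `J` of `F(R)`: `I`, `ψ(I)`,
`y_i y_j - (-1)^{|x_i||x_j|} y_j y_i - ψ({x_i, x_j})` and
`y_i x_j - (-1)^{|x_i||x_j|} x_j y_i - {x_i, x_j}`. -/
def Jgens {k R F : Type} [Field k] [Ring R] [Algebra k R] [Ring F] [Algebra k F]
    {Λ : Type} (𝒜 : ℤ → Submodule k R) (P : DGPoissonAlgebra k R 𝒜)
    (x : Λ → R) (w : Λ → ℤ) (ι : R →ₐ[k] F) (ψ : Λ → R →ₗ[k] R) (y : Λ → F)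
    (I : Submodule k R) : Set F :=
  (⇑ι '' (I : Set R)) ∪ (psiF ι ψ y '' (I : Set R)) ∪
  {z | ∃ α β, z = y α * y β - sgn (w α * w β) • (y β * y α)
      - psiF ι ψ y (P.br (x α) (x β))} ∪
  {z | ∃ α β, z = y α * ι (x β) - sgn (w α * w β) • (ι (x β) * y α)
      - ι (P.br (x α) (x β))}


lemma sgn_add_eq (a b : ℤ) : sgn (a + b) = sgn a * sgn b := by
  simp [sgn, Int.negOnePow_add]

lemma sgn_congr' {a b : ℤ} (h : Even (a - b)) : sgn a = sgn b := by
  unfold sgn; rw [(Int.negOnePow_eq_iff a b).2 h]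

lemma sgn_zero' : sgn 0 = 1 := by simp [sgn]

lemma sgn_even_one {a : ℤ} (h : Even a) : sgn a = 1 := by
  have h0 : Even (a - 0) := by simpa using h
  rw [sgn_congr' h0, sgn_zero']

lemma key_identity {F : Type*} [Ring F] (α β γ : ℤ) (A B C PA PB brA brB : F)
    (hACP : A * (C * PB) = α • (C * (A * PB)))
    (hBCP : B * (C * PA) = β • (C * (B * PA)))
    (hBr : γ • (B * brA) = β • (brA * B)) :
    (A * PB + γ • (B * PA)) * C - (α * β) • (C * (A * PB + γ • (B * PA)))
        - (A * brB + β • (brA * B))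
      = A * (PB * C - β • (C * PB) - brB)
        + γ • (B * (PA * C - α • (C * PA) - brA)) := by
  simp only [mul_add, add_mul, mul_sub, sub_mul, smul_add, smul_sub, smul_smul,
    smul_mul_assoc, mul_smul_comm, mul_assoc]
  rw [hACP, hBCP, ← hBr]
  module

/-- For every `i` and every homogeneous `f ∈ R`, the element
`ψ(f) x_i - (-1)^{|f||x_i|} x_i ψ(f) - {f, x_i}` of `F(R)` lies in the ideal `J`. -/
theorem stmt6 (k R F : Type) [Field k] [Ring R] [Algebra k R] [Ring F] [Algebra k F]
    (n : ℕ) (𝒜 : ℤ → Submodule k R) [GradedAlgebra 𝒜]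
    (ℱ : ℤ → Submodule k F) [GradedAlgebra ℱ]
    (P : DGPoissonAlgebra k R 𝒜)
    (x : Fin n → R) (w : Fin n → ℤ) (hx : ∀ i, x i ∈ 𝒜 (w i))
    (hgen : Algebra.adjoin k (Set.range x) = ⊤)
    (ψ : Fin n → R →ₗ[k] R)
    (hψx : ∀ i, ψ i (x i) = 1) (hψx' : ∀ i j, i ≠ j → ψ i (x j) = 0)
    (hψmem : ∀ (r : Fin n) ⦃i : ℤ⦄ ⦃a : R⦄, a ∈ 𝒜 i → ψ r a ∈ 𝒜 (i - w r))
    (hψmul : ∀ (r : Fin n) ⦃i j : ℤ⦄ ⦃a b : R⦄, a ∈ 𝒜 i → b ∈ 𝒜 j →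
      ψ r (a * b) = a * ψ r b + sgn (i * j) • (b * ψ r a))
    (ι : R →ₐ[k] F) (hι : ∀ ⦃i : ℤ⦄ ⦃a : R⦄, a ∈ 𝒜 i → ι a ∈ ℱ i)
    (y : Fin n → F) (hy : ∀ i, y i ∈ ℱ (w i))
    (I : Submodule k R) (hI : IsDGPoissonIdeal k 𝒜 P I) :
    ∀ (i : Fin n) ⦃l : ℤ⦄ ⦃f : R⦄, f ∈ 𝒜 l →
      psiF ι ψ y f * ι (x i) - sgn (l * w i) • (ι (x i) * psiF ι ψ y f)
          - ι (P.br f (x i))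
        ∈ idealGen k (Jgens 𝒜 P x w ι ψ y I) := by
    classical
  intro i
  set J : Submodule k F := idealGen k (Jgens 𝒜 P x w ι ψ y I) with hJdef
  have hpsi : ∀ f : R, psiF ι ψ y f = ∑ α : Fin n, ι (ψ α f) * y α := fun f =>
    finsum_eq_sum_of_fintype _
  -- J is closed under left multiplication
  have hJleft : ∀ (u z : F), z ∈ J → u * z ∈ J := by
    intro u z hz
    have hz' : z ∈ Submodule.span k
        {z : F | ∃ u v : F, ∃ s ∈ Jgens 𝒜 P x w ι ψ y I, z = u * s * v} := hz
    clear hz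
    induction hz' using Submodule.span_induction with
    | mem v hv =>
      obtain ⟨a, b, s, hs, rfl⟩ := hv
      exact Submodule.subset_span ⟨u * a, b, s, hs, by rw [mul_assoc, mul_assoc, mul_assoc]⟩
    | zero => simpa using (Submodule.zero_mem J)
    | add v₁ v₂ h₁ h₂ ih₁ ih₂ => simpa [mul_add] using Submodule.add_mem J ih₁ ih₂
    | smul a v hv ih => simpa [mul_smul_comm] using Submodule.smul_mem J a ih
  have hgenJ : ∀ s, s ∈ Jgens 𝒜 P x w ι ψ y I → s ∈ J := fun s hs =>
    Submodule.subset_span ⟨1, 1, s, hs, by rw [one_mul, mul_one]⟩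
  -- basic psiF facts
  have hψ1 : ∀ r : Fin n, ψ r (1 : R) = 0 := by
    intro r
    have h := hψmul r (SetLike.one_mem_graded 𝒜) (SetLike.one_mem_graded 𝒜)
    simp only [one_mul, mul_one, mul_zero, sgn_zero', one_smul] at h
    exact (left_eq_add.mp h)
  have hpsi_one : psiF ι ψ y (1 : R) = 0 := by
    rw [hpsi]; simp [hψ1]
  have hpsi_add : ∀ f g : R, psiF ι ψ y (f + g) = psiF ι ψ y f + psiF ι ψ y g := by
    intro f g
    rw [hpsi, hpsi, hpsi, ← Finset.sum_add_distrib]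
    exact Finset.sum_congr rfl fun r _ => by rw [map_add, map_add, add_mul]
  have hpsi_zero : psiF ι ψ y (0 : R) = 0 := by
    rw [hpsi]; simp
  have hpsi_smul : ∀ (t : k) (f : R), psiF ι ψ y (t • f) = t • psiF ι ψ y f := by
    intro t f
    rw [hpsi, hpsi, Finset.smul_sum]
    exact Finset.sum_congr rfl fun r _ => by rw [map_smul, map_smul, smul_mul_assoc]
  have hpsi_x : ∀ r : Fin n, psiF ι ψ y (x r) = y r := by
    intro r
    rw [hpsi, Finset.sum_eq_single r]
    · rw [hψx r, map_one, one_mul]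
    · intro b _ hb; rw [hψx' b r hb, map_zero, zero_mul]
    · intro h; exact absurd (Finset.mem_univ r) h
  -- psiF of a product of homogeneous elements
  have hpsi_mul : ∀ (p q : ℤ) (a b : R), a ∈ 𝒜 p → b ∈ 𝒜 q →
      psiF ι ψ y (a * b) = ι a * psiF ι ψ y b + sgn (p * q) • (ι b * psiF ι ψ y a) := by
    intro p q a b ha hb
    rw [hpsi, hpsi, hpsi, Finset.mul_sum, Finset.mul_sum, Finset.smul_sum,
      ← Finset.sum_add_distrib]
    refine Finset.sum_congr rfl fun r _ => ?_
    simp only [hψmul r ha hb, map_add, map_mul, map_zsmul, add_mul, smul_mul_assoc,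
      mul_assoc]
  -- bracket with 1
  have hbr1 : P.br (1 : R) (x i) = 0 := by
    have h := P.leibniz (hx i) (SetLike.one_mem_graded 𝒜) (SetLike.one_mem_graded 𝒜)
    simp only [one_mul, mul_one, mul_zero, sgn_zero', one_smul] at h
    have h0 : P.br (x i) (1 : R) = 0 := (left_eq_add.mp h)
    rw [P.antisymm (SetLike.one_mem_graded 𝒜) (hx i), h0, smul_zero, neg_zero]
  -- bracket of a product with x i
  have hbr_mul : ∀ (p q : ℤ) (a b : R), a ∈ 𝒜 p → b ∈ 𝒜 q →
      P.br (a * b) (x i) = a * P.br b (x i) + sgn (q * w i) • (P.br a (x i) * b) := by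
    intro p q a b ha hb
    have hab : a * b ∈ 𝒜 (p + q) := SetLike.mul_mem_graded ha hb
    have h1 := P.antisymm hab (hx i)
    have h2 := P.leibniz (hx i) ha hb
    have h3 := P.antisymm (hx i) ha
    have h4 := P.antisymm (hx i) hb
    rw [h2, h3, h4] at h1
    have e1 : sgn ((p + q) * w i) * sgn (w i * p) = sgn (q * w i) := by
      rw [← sgn_add_eq]; exact sgn_congr' ⟨p * w i, by ring⟩
    have e2 : sgn ((p + q) * w i) * (sgn (w i * p) * sgn (w i * q)) = 1 := by
      rw [← sgn_add_eq, ← sgn_add_eq]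
      exact sgn_even_one ⟨p * w i + q * w i, by ring⟩
    rw [h1]
    simp only [neg_smul, smul_neg, neg_mul, mul_neg, neg_neg, smul_add, smul_smul,
      smul_mul_assoc, mul_smul_comm, neg_add_rev]
    match_scalars <;> first | linear_combination e1 | linear_combination e2
  -- the multiplicative step
  have hstep : ∀ (p q : ℤ) (a b : R), a ∈ 𝒜 p → b ∈ 𝒜 q →
      (psiF ι ψ y a * ι (x i) - sgn (p * w i) • (ι (x i) * psiF ι ψ y a)
        - ι (P.br a (x i)) ∈ J) →
      (psiF ι ψ y b * ι (x i) - sgn (q * w i) • (ι (x i) * psiF ι ψ y b)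
        - ι (P.br b (x i)) ∈ J) →
      psiF ι ψ y (a * b) * ι (x i) - sgn ((p + q) * w i) • (ι (x i) * psiF ι ψ y (a * b))
        - ι (P.br (a * b) (x i)) ∈ J := by
    intro p q a b ha hb hEa hEb
    have hACP : ι a * (ι (x i) * psiF ι ψ y b)
        = sgn (p * w i) • (ι (x i) * (ι a * psiF ι ψ y b)) := by
      have hg := congrArg ι (P.gcomm ha (hx i))
      rw [map_mul, map_zsmul, map_mul] at hg
      calc ι a * (ι (x i) * psiF ι ψ y b) = (ι a * ι (x i)) * psiF ι ψ y b := by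
            rw [mul_assoc]
        _ = sgn (p * w i) • (ι (x i) * (ι a * psiF ι ψ y b)) := by
            rw [hg, smul_mul_assoc, mul_assoc]
    have hBCP : ι b * (ι (x i) * psiF ι ψ y a)
        = sgn (q * w i) • (ι (x i) * (ι b * psiF ι ψ y a)) := by
      have hg := congrArg ι (P.gcomm hb (hx i))
      rw [map_mul, map_zsmul, map_mul] at hg
      calc ι b * (ι (x i) * psiF ι ψ y a) = (ι b * ι (x i)) * psiF ι ψ y a := by
            rw [mul_assoc]
        _ = sgn (q * w i) • (ι (x i) * (ι b * psiF ι ψ y a)) := by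
            rw [hg, smul_mul_assoc, mul_assoc]
    have hBr : sgn (p * q) • (ι b * ι (P.br a (x i)))
        = sgn (q * w i) • (ι (P.br a (x i)) * ι b) := by
      have hg := congrArg ι (P.gcomm hb (P.br_mem ha (hx i)))
      rw [map_mul, map_zsmul, map_mul] at hg
      rw [hg, smul_smul, ← sgn_add_eq]
      congr 1
      exact sgn_congr' ⟨p * q, by ring⟩
    have key := key_identity (sgn (p * w i)) (sgn (q * w i)) (sgn (p * q))
      (ι a) (ι b) (ι (x i)) (psiF ι ψ y a) (psiF ι ψ y b)
      (ι (P.br a (x i))) (ι (P.br b (x i))) hACP hBCP hBr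
    have hE : psiF ι ψ y (a * b) * ι (x i)
        - sgn ((p + q) * w i) • (ι (x i) * psiF ι ψ y (a * b)) - ι (P.br (a * b) (x i))
        = ι a * (psiF ι ψ y b * ι (x i) - sgn (q * w i) • (ι (x i) * psiF ι ψ y b)
            - ι (P.br b (x i)))
          + sgn (p * q) • (ι b * (psiF ι ψ y a * ι (x i)
            - sgn (p * w i) • (ι (x i) * psiF ι ψ y a) - ι (P.br a (x i)))) := by
      rw [hpsi_mul p q a b ha hb, hbr_mul p q a b ha hb, map_add, map_mul, map_zsmul,
        map_mul, show (p + q) * w i = p * w i + q * w i by ring, sgn_add_eq]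
      exact key
    rw [hE]
    exact Submodule.add_mem J (hJleft _ _ hEb)
      (zsmul_mem (hJleft _ _ hEa) _)
  -- every monomial satisfies the statement
  have hmono : ∀ s ∈ Submonoid.closure (Set.range x), ∃ d : ℤ, s ∈ 𝒜 d ∧
      psiF ι ψ y s * ι (x i) - sgn (d * w i) • (ι (x i) * psiF ι ψ y s)
        - ι (P.br s (x i)) ∈ J := by
    intro s hs
    induction hs using Submonoid.closure_induction with
    | mem v hv =>
      obtain ⟨r, rfl⟩ := hv
      refine ⟨w r, hx r, ?_⟩
      rw [hpsi_x r]
      exact hgenJ _ (Or.inr ⟨r, i, rfl⟩)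
    | one =>
      refine ⟨0, SetLike.one_mem_graded 𝒜, ?_⟩
      rw [hpsi_one, hbr1, map_zero, zero_mul, mul_zero, smul_zero, sub_zero, sub_zero]
      exact Submodule.zero_mem J
    | mul u v hu hv ihu ihv =>
      obtain ⟨p, hup, hEu⟩ := ihu
      obtain ⟨q, hvq, hEv⟩ := ihv
      exact ⟨p + q, SetLike.mul_mem_graded hup hvq, hstep p q u v hup hvq hEu hEv⟩
  -- pass to spans via the decomposition
  intro l f hf
  have hf' : f ∈ Submodule.span k ((Submonoid.closure (Set.range x) : Submonoid R) : Set R) := by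
    have h := Algebra.adjoin_eq_span k (Set.range x)
    rw [hgen] at h
    rw [← h]
    simp
  have main : ∀ l' : ℤ,
      psiF ι ψ y (((DirectSum.decompose 𝒜 f) l' : 𝒜 l') : R) * ι (x i)
        - sgn (l' * w i) • (ι (x i) * psiF ι ψ y (((DirectSum.decompose 𝒜 f) l' : 𝒜 l') : R))
        - ι (P.br (((DirectSum.decompose 𝒜 f) l' : 𝒜 l') : R) (x i)) ∈ J := by
    clear hf
    induction hf' using Submodule.span_induction with
    | mem s hs =>
      obtain ⟨d, hd, hEd⟩ := hmono s hs
      intro l'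
      by_cases hld : d = l'
      · subst hld
        rw [DirectSum.decompose_of_mem_same 𝒜 hd]
        exact hEd
      · rw [DirectSum.decompose_of_mem_ne 𝒜 hd hld]
        simp only [hpsi_zero, map_zero, LinearMap.zero_apply, zero_mul, mul_zero,
          smul_zero, sub_zero]
        exact Submodule.zero_mem J
    | zero =>
      intro l'
      rw [DirectSum.decompose_zero]
      simp only [DirectSum.zero_apply, ZeroMemClass.coe_zero]
      simp only [hpsi_zero, map_zero, LinearMap.zero_apply, zero_mul, mul_zero,
        smul_zero, sub_zero]
      exact Submodule.zero_mem J
    | add u v hu hv ihu ihv =>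
      intro l'
      rw [DirectSum.decompose_add]
      simp only [DirectSum.add_apply, Submodule.coe_add]
      rw [hpsi_add, map_add, LinearMap.add_apply, map_add, add_mul, mul_add, smul_add]
      have : ∀ Pu Pv Bu Bv Cu Cv : F,
          Pu + Pv - (Cu + Cv) - (Bu + Bv) = (Pu - Cu - Bu) + (Pv - Cv - Bv) := by
        intro Pu Pv Bu Bv Cu Cv; abel
      rw [this]
      exact Submodule.add_mem J (ihu l') (ihv l')
    | smul t u hu ihu =>
      intro l'
      rw [DirectSum.decompose_smul]
      simp only [DirectSum.smul_apply, SetLike.val_smul]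
      rw [hpsi_smul, map_smul, LinearMap.smul_apply, map_smul, smul_mul_assoc,
        mul_smul_comm, ← smul_comm t (sgn (l' * w i)) _, ← smul_sub, ← smul_sub]
      exact Submodule.smul_mem J t (ihu l')
  have := main l
  rwa [DirectSum.decompose_of_mem_same 𝒜 hf] at this
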